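/- Let x be a real sequence with 0 ≤ x_n ≤ α/(n+1) for all n ≥ 0, for some α > 0. Then for every n ≥ 0, | Σ_{k=0}^{n} ( x^*_k − x_k ) | ≤ α. -/
import Mathlib


open scoped BigOperators

/-- The decreasing rearrangement of a real sequence:
`x^*_n = inf { t ≥ 0 : #{k : |x_k| > t} ≤ n }`. -/
noncomputable def dRear (x : ℕ → ℝ) (n : ℕ) : ℝ :=
  sInf {t : ℝ | 0 ≤ t ∧ {k : ℕ | t < |x k|}.encard ≤ n}

section Aux

variable {x : ℕ → ℝ} {α : ℝ} (hα : 0 < α)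
  (hx : ∀ n : ℕ, 0 ≤ x n ∧ x n ≤ α / ((n : ℝ) + 1))

/-- The admissible set, with `|x k|` simplified to `x k`. -/
def dSet (x : ℕ → ℝ) (n : ℕ) : Set ℝ :=
  {t : ℝ | 0 ≤ t ∧ {k : ℕ | t < x k}.encard ≤ n}

lemma enat_add_one_le {a b : ℕ} (h : (a : ℕ∞) + 1 ≤ (b : ℕ∞)) : a + 1 ≤ b := by
  exact_mod_cast h

include hx in
lemma dRear_eq (n : ℕ) : dRear x n = sInf (dSet x n) := by
  unfold dRear dSet
  congr 2
  ext t
  have : ∀ k, |x k| = x k := fun k => abs_of_nonneg (hx k).1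
  simp [this]

include hα hx in
lemma div_mem_dSet (n : ℕ) : α / ((n : ℝ) + 1) ∈ dSet x n := by
  constructor
  · positivity
  · have hsub : {k : ℕ | α / ((n : ℝ) + 1) < x k} ⊆ ↑(Finset.range n) := by
      intro k hk
      simp only [Set.mem_setOf_eq] at hk
      have hk2 : α / ((n : ℝ) + 1) < α / ((k : ℝ) + 1) := lt_of_lt_of_le hk (hx k).2
      have : (k : ℝ) + 1 < (n : ℝ) + 1 := by
        have hkpos : (0:ℝ) < (k : ℝ) + 1 := by positivity
        have hnpos : (0:ℝ) < (n : ℝ) + 1 := by positivity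
        by_contra hcon
        push_neg at hcon
        have := div_le_div_of_nonneg_left hα.le hnpos hcon
        linarith
      have : (k : ℝ) < n := by linarith
      simpa using Nat.cast_lt.mp this
    calc {k : ℕ | α / ((n : ℝ) + 1) < x k}.encard ≤ (↑(Finset.range n) : Set ℕ).encard :=
          Set.encard_mono hsub
      _ = n := by rw [Set.encard_coe_eq_coe_finsetCard, Finset.card_range]

lemma bddBelow_dSet (n : ℕ) : BddBelow (dSet x n) :=
  ⟨0, fun t ht => ht.1⟩

include hα hx in
lemma dSet_nonempty (n : ℕ) : (dSet x n).Nonempty :=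
  ⟨_, div_mem_dSet hα hx n⟩

include hα hx in
lemma dRear_nonneg (n : ℕ) : 0 ≤ dRear x n := by
  rw [dRear_eq hx]
  exact le_csInf (dSet_nonempty hα hx n) fun t ht => ht.1

include hα hx in
lemma dRear_le_div (n : ℕ) : dRear x n ≤ α / ((n : ℝ) + 1) := by
  rw [dRear_eq hx]
  exact csInf_le (bddBelow_dSet n) (div_mem_dSet hα hx n)

include hα hx in
lemma dRear_mem (n : ℕ) : dRear x n ∈ dSet x n := by
  refine ⟨dRear_nonneg hα hx n, ?_⟩
  by_contra hcon
  push_neg at hcon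
  have h1 : (n + 1 : ℕ∞) ≤ {k : ℕ | dRear x n < x k}.encard := Order.add_one_le_of_lt hcon
  obtain ⟨F, hFsub, hFcard⟩ := Set.exists_subset_encard_eq h1
  have hFfin : F.Finite := Set.finite_of_encard_eq_coe (by exact_mod_cast hFcard)
  have hFne : F.Nonempty := by
    rw [← Set.encard_ne_zero, hFcard]
    have : ((n + 1 : ℕ) : ℕ∞) ≠ 0 := by exact_mod_cast Nat.succ_ne_zero n
    simpa using this
  set G := hFfin.toFinset with hG
  have hGne : G.Nonempty := by simpa [hG] using hFne
  obtain ⟨j, hjG, hjmin⟩ := G.exists_min_image x hGne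
  have hjF : j ∈ F := by simpa [hG] using hjG
  have hjx : dRear x n < x j := hFsub hjF
  set t := (dRear x n + x j) / 2 with ht
  have ht1 : dRear x n < t := by rw [ht]; linarith
  have ht2 : t < x j := by rw [ht]; linarith
  rw [dRear_eq hx] at ht1
  obtain ⟨s, hs, hst⟩ := exists_lt_of_csInf_lt (dSet_nonempty hα hx n) ht1
  have hsub : F ⊆ {k : ℕ | s < x k} := by
    intro i hiF
    have : j ∈ G := hjG
    have := hjmin i (by simpa [hG] using hiF)
    simp only [Set.mem_setOf_eq]
    linarith
  have : (n + 1 : ℕ∞) ≤ {k : ℕ | s < x k}.encard := by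
    rw [← hFcard]; exact Set.encard_mono hsub
  have hle : {k : ℕ | s < x k}.encard ≤ n := hs.2
  have := enat_add_one_le (le_trans this hle)
  omega

include hα hx in
/-- If `S` has more than `k` elements and `j` realizes the minimum of `x` on `S`,
then `x j ≤ dRear x k`. -/
lemma min_le_dRear {k : ℕ} {S : Finset ℕ} (hS : k < S.card) {j : ℕ} (hjS : j ∈ S)
    (hjmin : ∀ i ∈ S, x j ≤ x i) : x j ≤ dRear x k := by
  rw [dRear_eq hx]
  refine le_csInf (dSet_nonempty hα hx k) fun t ht => ?_
  by_contra hcon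
  push_neg at hcon
  have hsub : ↑S ⊆ {i : ℕ | t < x i} := by
    intro i hi
    simp only [Finset.coe_sort_coe, Set.mem_setOf_eq]
    have := hjmin i (by simpa using hi)
    linarith
  have h1 : (S.card : ℕ∞) ≤ {i : ℕ | t < x i}.encard := by
    rw [← Set.encard_coe_eq_coe_finsetCard]
    exact Set.encard_mono hsub
  have h2 : {i : ℕ | t < x i}.encard ≤ k := ht.2
  have : (S.card : ℕ∞) ≤ (k : ℕ∞) := le_trans h1 h2
  rw [Nat.cast_le] at this
  omega

include hα hx in
/-- Any finite partial sum of `x` is dominated by the corresponding sum of `dRear x`. -/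
lemma sum_le_sum_dRear (S : Finset ℕ) :
    ∑ j ∈ S, x j ≤ ∑ k ∈ Finset.range S.card, dRear x k := by
  suffices H : ∀ (m : ℕ) (S : Finset ℕ), S.card = m →
      ∑ j ∈ S, x j ≤ ∑ k ∈ Finset.range S.card, dRear x k from H S.card S rfl
  intro m
  induction m with
  | zero =>
    intro S hn
    rw [Finset.card_eq_zero] at hn
    simp [hn]
  | succ m ih =>
    intro S hn
    have hSne : S.Nonempty := by
      rw [← Finset.card_pos, hn]; omega
    obtain ⟨j, hjS, hjmin⟩ := S.exists_min_image x hSne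
    have hcard : (S.erase j).card = m := by
      rw [Finset.card_erase_of_mem hjS, hn]
      omega
    have hstep := ih (S.erase j) hcard
    rw [hcard] at hstep
    have hjle : x j ≤ dRear x m := min_le_dRear hα hx (by omega) hjS hjmin
    have : ∑ i ∈ S, x i = x j + ∑ i ∈ S.erase j, x i :=
      (Finset.add_sum_erase S x hjS).symm
    rw [this, hn, Finset.sum_range_succ]
    linarith

include hα hx in
/-- There are at least `k+1` indices `j` with `dRear x k ≤ x j`. -/
lemma encard_ge (k : ℕ) : (k + 1 : ℕ∞) ≤ {j : ℕ | dRear x k ≤ x j}.encard := by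
  set s := dRear x k with hs
  rcases eq_or_lt_of_le (dRear_nonneg hα hx k) with h0 | h0
  · have : {j : ℕ | s ≤ x j} = Set.univ := by
      ext j; simp only [Set.mem_setOf_eq, Set.mem_univ, iff_true]
      rw [hs, ← h0]; exact (hx j).1
    rw [this, Set.infinite_univ.encard_eq]
    exact le_top
  · -- s > 0
    by_contra hcon
    push_neg at hcon
    set D := {j : ℕ | s ≤ x j} with hD
    have hDk : D.encard ≤ k := by
      have := Order.le_of_lt_add_one hcon
      exact this
    have hDfin : D.Finite := Set.finite_of_encard_le_coe hDk
    -- the set E of indices with s/2 < x j < s is finite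
    set E := {j : ℕ | s / 2 < x j ∧ x j < s} with hE
    have hEfin : E.Finite := by
      apply Set.Finite.subset (Set.finite_Iio (Nat.ceil (2 * α / s)))
      intro j hj
      simp only [hE, Set.mem_setOf_eq] at hj
      have h1 : s / 2 < α / ((j : ℝ) + 1) := lt_of_lt_of_le hj.1 (hx j).2
      have hjpos : (0:ℝ) < (j : ℝ) + 1 := by positivity
      have : (j : ℝ) + 1 < 2 * α / s := by
        rw [div_lt_div_iff₀ (by linarith) hjpos] at h1
        rw [lt_div_iff₀ h0]
        nlinarith
      have hjlt : (j : ℝ) < 2 * α / s := by linarith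
      exact Set.mem_Iio.mpr (Nat.lt_ceil.mpr hjlt)
    -- find t with 0 ≤ t < s and {j | t < x j} ⊆ D
    obtain ⟨t, ht0, hts, hsub⟩ : ∃ t, 0 ≤ t ∧ t < s ∧ {j : ℕ | t < x j} ⊆ D := by
      by_cases hEne : (hEfin.toFinset.image x).Nonempty
      · obtain ⟨j0, hj0, hj0eq⟩ := Finset.mem_image.mp ((hEfin.toFinset.image x).max'_mem hEne)
        have hj0E : j0 ∈ E := hEfin.mem_toFinset.mp hj0
        refine ⟨(hEfin.toFinset.image x).max' hEne, ?_, ?_, ?_⟩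
        · rw [← hj0eq]; exact (hx j0).1
        · rw [← hj0eq]; exact hj0E.2
        · intro j hj
          simp only [Set.mem_setOf_eq] at hj
          by_contra hjD
          have hjlt : x j < s := by
            simp only [hD, Set.mem_setOf_eq] at hjD; linarith
          rw [← hj0eq] at hj
          have hjgt : s / 2 < x j := by
            have := hj0E.1
            linarith
          have hjE : j ∈ E := ⟨hjgt, hjlt⟩
          have : x j ≤ x j0 := by
            rw [hj0eq]
            exact Finset.le_max' _ _ (Finset.mem_image_of_mem x (hEfin.mem_toFinset.mpr hjE))
          linarith
      · refine ⟨s / 2, by linarith, by linarith, ?_⟩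
        intro j hj
        simp only [Set.mem_setOf_eq] at hj
        by_contra hjD
        have hjlt : x j < s := by
          simp only [hD, Set.mem_setOf_eq] at hjD; linarith
        have hjE : j ∈ E := ⟨hj, hjlt⟩
        exact hEne ⟨x j, Finset.mem_image_of_mem x (hEfin.mem_toFinset.mpr hjE)⟩
    have htmem : t ∈ dSet x k :=
      ⟨ht0, le_trans (Set.encard_mono hsub) hDk⟩
    have : s ≤ t := by
      rw [hs, dRear_eq hx]
      exact csInf_le (bddBelow_dSet k) htmem
    linarith

include hα hx in
lemma exists_finset (n : ℕ) :
    ∃ S : Finset ℕ, S.card = n + 1 ∧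
      ∑ k ∈ Finset.range (n + 1), dRear x k ≤ ∑ j ∈ S, x j := by
  induction n with
  | zero =>
    have h := encard_ge hα hx 0
    have hne : {j : ℕ | dRear x 0 ≤ x j}.Nonempty := by
      rw [Set.nonempty_iff_ne_empty]
      rintro h'
      rw [h'] at h
      simp at h
    obtain ⟨j, hj⟩ := hne
    exact ⟨{j}, by simp, by simpa using hj⟩
  | succ m ih =>
    obtain ⟨S, hScard, hSsum⟩ := ih
    -- find j ∉ S with dRear x (m+1) ≤ x j
    have h := encard_ge hα hx (m + 1)
    have hnotsub : ¬ ({j : ℕ | dRear x (m + 1) ≤ x j} ⊆ ↑S) := by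
      intro hsub
      have h2 := le_trans h (Set.encard_mono hsub)
      rw [Set.encard_coe_eq_coe_finsetCard, hScard] at h2
      have := enat_add_one_le h2
      omega
    obtain ⟨j, hjmem, hjS⟩ := Set.not_subset.mp hnotsub
    have hjS' : j ∉ S := by simpa using hjS
    refine ⟨insert j S, ?_, ?_⟩
    · rw [Finset.card_insert_of_notMem hjS', hScard]
    · rw [Finset.sum_insert hjS', Finset.sum_range_succ]
      have : dRear x (m + 1) ≤ x j := hjmem
      linarith

end Aux

/-- If `0 ≤ x_n ≤ α/(n+1)` for all `n` (with `α > 0`), then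
`|Σ_{k=0}^n (x^*_k - x_k)| ≤ α` for every `n`. -/
theorem stmt_4 (x : ℕ → ℝ) (α : ℝ) (hα : 0 < α)
    (hx : ∀ n : ℕ, 0 ≤ x n ∧ x n ≤ α / ((n : ℝ) + 1)) :
    ∀ n : ℕ, |∑ k ∈ Finset.range (n + 1), (dRear x k - x k)| ≤ α := by
  intro n
  rw [Finset.sum_sub_distrib, abs_le]
  constructor
  · -- lower bound: the sum of dRear dominates the sum of x on range (n+1)
    have h := sum_le_sum_dRear hα hx (Finset.range (n + 1))
    rw [Finset.card_range] at h
    linarith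
  · -- upper bound
    obtain ⟨S, hScard, hSsum⟩ := exists_finset hα hx n
    set R := Finset.range (n + 1) with hR
    have key : ∑ j ∈ S, x j - ∑ k ∈ R, x k ≤ ∑ j ∈ S \ R, x j := by
      have h1 : ∑ j ∈ S \ R, x j = ∑ j ∈ S, x j - ∑ j ∈ S ∩ R, x j := by
        rw [← Finset.sdiff_inter_self_left S R]
        exact Finset.sum_sdiff_eq_sub Finset.inter_subset_left
      have h2 : ∑ j ∈ R \ S, x j = ∑ j ∈ R, x j - ∑ j ∈ R ∩ S, x j := by
        rw [← Finset.sdiff_inter_self_left R S]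
        exact Finset.sum_sdiff_eq_sub Finset.inter_subset_left
      have h4 : ∑ j ∈ R ∩ S, x j = ∑ j ∈ S ∩ R, x j := by rw [Finset.inter_comm]
      have h3 : 0 ≤ ∑ j ∈ R \ S, x j :=
        Finset.sum_nonneg fun j _ => (hx j).1
      linarith
    have hbound : ∑ j ∈ S \ R, x j ≤ ((S \ R).card : ℝ) * (α / ((n : ℝ) + 2)) := by
      rw [← nsmul_eq_mul]
      apply Finset.sum_le_card_nsmul
      intro j hj
      have hjR : j ∉ R := (Finset.mem_sdiff.mp hj).2
      have hjge : n + 1 ≤ j := by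
        by_contra hlt
        exact hjR (Finset.mem_range.mpr (by omega))
      have h1 : x j ≤ α / ((j : ℝ) + 1) := (hx j).2
      have h2 : α / ((j : ℝ) + 1) ≤ α / ((n : ℝ) + 2) := by
        apply div_le_div_of_nonneg_left hα.le (by positivity)
        have : ((n : ℝ) + 1) ≤ (j : ℝ) := by exact_mod_cast hjge
        linarith
      linarith
    have hcard : ((S \ R).card : ℝ) ≤ (n : ℝ) + 1 := by
      have : (S \ R).card ≤ S.card := Finset.card_le_card Finset.sdiff_subset
      rw [hScard] at this
      exact_mod_cast this
    have hpos : (0:ℝ) < (n : ℝ) + 2 := by positivity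
    have hfin1 : ((S \ R).card : ℝ) * (α / ((n : ℝ) + 2)) ≤ ((n:ℝ) + 1) * (α / ((n : ℝ) + 2)) :=
      mul_le_mul_of_nonneg_right hcard (by positivity)
    have hfin2 : ((n:ℝ) + 1) * (α / ((n : ℝ) + 2)) ≤ α := by
      have heq : ((n:ℝ) + 1) * (α / ((n : ℝ) + 2)) = ((n:ℝ) + 1) * α / ((n : ℝ) + 2) :=
        (mul_div_assoc _ _ _).symm
      rw [heq, div_le_iff₀ hpos]
      nlinarith
    linarith
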